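/- arXiv:2203.09118 — 2 statements merged into one kernel-verified Lean document; each statement's English description precedes it below -/
import Mathlib

section
/- Let Ω be a finite nonempty set and let (P_s)_{s ∈ [0,T]} be a family of probability mass functions on Ω such that P_s(ω) > 0 for all s and ω and s ↦ P_s(ω) is continuous for each ω. Let λ : [0,T] → [0,∞) be an integrable sampling density with ∫₀ᵀ λ(s) ds = 1, and define the net distribution M(ω) = ∫₀ᵀ P_s(ω)·λ(s) ds. Then there exists an equivalent time t* ∈ [0,T] such that KL(P₀‖M) = KL(P₀‖P_{t*}); consequently a dataset curated over the period [0,T] with sampling density λ produces the same asymptotic loss value H(P₀) + KL(P₀‖M) as a dataset of the same size sampled entirely at time t*. -/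
/-!
`KL(P₀‖·)` sits between `0 = KL(P₀‖P₀)` (Gibbs' inequality, since `M` is again a probability
vector) and its `λ`-average along the path: by concavity of `log`,
`log M(ω) ≥ ∫ log P_s(ω) λ(s) ds`, so `KL(P₀‖M) ≤ ∫ KL(P₀‖P_s) λ(s) ds ≤ max_s KL(P₀‖P_s)`.
Since `s ↦ KL(P₀‖P_s)` is continuous, the intermediate value theorem yields `t*`.
-/

open MeasureTheory intervalIntegral Set

structure IsProbDensityOn (lam : ℝ → ℝ) (a b : ℝ) : Prop where
  nonneg : ∀ s ∈ Icc a b, 0 ≤ lam s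
  intervalIntegrable : IntervalIntegrable lam volume a b
  integral_eq_one : ∫ s in a..b, lam s = 1

namespace IsProbDensityOn

variable {a b : ℝ} {lam f : ℝ → ℝ}

theorem integral_const_mul (hlam : IsProbDensityOn lam a b) (c : ℝ) :
    ∫ s in a..b, c * lam s = c := by
  rw [intervalIntegral.integral_const_mul, hlam.integral_eq_one, mul_one]

theorem intervalIntegrable_mul (hlam : IsProbDensityOn lam a b) (hab : a ≤ b)
    (hf : ContinuousOn f (Icc a b)) : IntervalIntegrable (fun s => f s * lam s) volume a b :=
  hlam.intervalIntegrable.continuousOn_mul (uIcc_of_le hab ▸ hf)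

theorem exists_integral_mul_le (hlam : IsProbDensityOn lam a b) (hab : a ≤ b)
    (hf : ContinuousOn f (Icc a b)) : ∃ t ∈ Icc a b, ∫ s in a..b, f s * lam s ≤ f t := by
  obtain ⟨t, ht, hmax⟩ := isCompact_Icc.exists_isMaxOn (nonempty_Icc.2 hab) hf
  refine ⟨t, ht, ?_⟩
  calc ∫ s in a..b, f s * lam s ≤ ∫ s in a..b, f t * lam s :=
        integral_mono_on hab (hlam.intervalIntegrable_mul hab hf)
          (hlam.intervalIntegrable.const_mul _)
          fun s hs => mul_le_mul_of_nonneg_right (hmax hs) (hlam.nonneg s hs)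
    _ = f t := hlam.integral_const_mul _

theorem exists_le_integral_mul (hlam : IsProbDensityOn lam a b) (hab : a ≤ b)
    (hf : ContinuousOn f (Icc a b)) : ∃ t ∈ Icc a b, f t ≤ ∫ s in a..b, f s * lam s := by
  obtain ⟨t, ht, hle⟩ := hlam.exists_integral_mul_le hab hf.neg
  refine ⟨t, ht, ?_⟩
  simp only [Pi.neg_apply, neg_mul, intervalIntegral.integral_neg] at hle
  linarith

theorem integral_mul_pos (hlam : IsProbDensityOn lam a b) (hab : a ≤ b)
    (hf : ContinuousOn f (Icc a b)) (hf_pos : ∀ s ∈ Icc a b, 0 < f s) :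
    0 < ∫ s in a..b, f s * lam s := by
  obtain ⟨t, ht, hle⟩ := hlam.exists_le_integral_mul hab hf
  exact (hf_pos t ht).trans_le hle

/-- Jensen's inequality for the convex function `x ↦ log (c / x)`. -/
theorem log_div_integral_mul_le (hlam : IsProbDensityOn lam a b) (hab : a ≤ b)
    (hf : ContinuousOn f (Icc a b)) (hf_pos : ∀ s ∈ Icc a b, 0 < f s) {c : ℝ} (hc : 0 < c) :
    Real.log (c / ∫ s in a..b, f s * lam s) ≤ ∫ s in a..b, Real.log (c / f s) * lam s := by
  set m := ∫ s in a..b, f s * lam s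
  have hm : 0 < m := hlam.integral_mul_pos hab hf hf_pos
  have tangent : ∀ s ∈ Icc a b, Real.log (c / m) + 1 - m⁻¹ * f s ≤ Real.log (c / f s) := by
    intro s hs
    have hfs := hf_pos s hs
    have := Real.log_le_sub_one_of_pos (div_pos hfs hm)
    rw [Real.log_div hfs.ne' hm.ne', div_eq_inv_mul] at this
    rw [Real.log_div hc.ne' hm.ne', Real.log_div hc.ne' hfs.ne']
    linarith
  have hlog_cont : ContinuousOn (fun s => Real.log (c / f s)) (Icc a b) :=
    (continuousOn_const.div hf fun s hs => (hf_pos s hs).ne').log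
      fun s hs => (div_pos hc (hf_pos s hs)).ne'
  have hf_int := hlam.intervalIntegrable_mul hab hf
  calc Real.log (c / m)
      = ∫ s in a..b, ((Real.log (c / m) + 1) * lam s - m⁻¹ * (f s * lam s)) := by
        rw [integral_sub (hlam.intervalIntegrable.const_mul _) (hf_int.const_mul _),
          hlam.integral_const_mul, intervalIntegral.integral_const_mul, inv_mul_cancel₀ hm.ne']
        ring
    _ ≤ ∫ s in a..b, Real.log (c / f s) * lam s := by
        refine integral_mono_on hab ((hlam.intervalIntegrable.const_mul _).sub
          (hf_int.const_mul _)) (hlam.intervalIntegrable_mul hab hlog_cont) fun s hs => ?_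
        nlinarith [tangent s hs, hlam.nonneg s hs]

theorem exists_eq_of_le_integral_mul (hlam : IsProbDensityOn lam a b) (hab : a ≤ b)
    {g : ℝ → ℝ} {v : ℝ} (hg : ContinuousOn g (Icc a b)) (hv_ge : g a ≤ v)
    (hv_le : v ≤ ∫ s in a..b, g s * lam s) : ∃ t ∈ Icc a b, g t = v := by
  obtain ⟨t₀, ht₀, hle⟩ := hlam.exists_integral_mul_le hab hg
  have hsub : Icc a t₀ ⊆ Icc a b := Icc_subset_Icc le_rfl ht₀.2
  obtain ⟨t, ht, hgt⟩ :=
    intermediate_value_Icc ht₀.1 (hg.mono hsub) ⟨hv_ge, hv_le.trans hle⟩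
  exact ⟨t, hsub ht, hgt⟩

end IsProbDensityOn

section KLDivergence

variable {Ω : Type*} [Fintype Ω]

noncomputable def klDivergence (p q : Ω → ℝ) : ℝ :=
  ∑ ω, p ω * Real.log (p ω / q ω)

@[simp]
theorem klDivergence_self (p : Ω → ℝ) : klDivergence p p = 0 := by
  simp [klDivergence]

theorem klDivergence_nonneg {p q : Ω → ℝ} (hp : ∀ ω, 0 < p ω) (hq : ∀ ω, 0 < q ω)
    (hpq : ∑ ω, p ω = ∑ ω, q ω) : 0 ≤ klDivergence p q := by
  have term : ∀ ω, p ω - q ω ≤ p ω * Real.log (p ω / q ω) := by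
    intro ω
    have hlog := Real.log_le_sub_one_of_pos (div_pos (hq ω) (hp ω))
    have hmul := mul_le_mul_of_nonneg_left hlog (hp ω).le
    rw [mul_sub, mul_div_cancel₀ _ (hp ω).ne', ← inv_div, Real.log_inv] at hmul
    linarith
  calc 0 = ∑ ω, (p ω - q ω) := by rw [Finset.sum_sub_distrib, hpq, sub_self]
    _ ≤ klDivergence p q := Finset.sum_le_sum fun ω _ => term ω

theorem continuousOn_klDivergence {X : Type*} [TopologicalSpace X] {S : Set X} {p : Ω → ℝ}
    {q : X → Ω → ℝ} (hp : ∀ ω, p ω ≠ 0) (hq : ∀ ω, ContinuousOn (fun x => q x ω) S)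
    (hq_ne : ∀ x ∈ S, ∀ ω, q x ω ≠ 0) : ContinuousOn (fun x => klDivergence p (q x)) S :=
  continuousOn_finsetSum _ fun ω _ => continuousOn_const.mul <|
    (continuousOn_const.div (hq ω) fun x hx => hq_ne x hx ω).log
      fun x hx => div_ne_zero (hp ω) (hq_ne x hx ω)

end KLDivergence

section Mixture

variable {Ω : Type*} [Fintype Ω] {a b : ℝ} {lam : ℝ → ℝ} {q : ℝ → Ω → ℝ}

theorem IsProbDensityOn.sum_integral_mul_eq_one (hlam : IsProbDensityOn lam a b) (hab : a ≤ b)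
    (hq : ∀ ω, ContinuousOn (fun s => q s ω) (Icc a b))
    (hq_sum : ∀ s ∈ Icc a b, ∑ ω, q s ω = 1) :
    ∑ ω, ∫ s in a..b, q s ω * lam s = 1 := by
  rw [← integral_finsetSum fun ω _ => hlam.intervalIntegrable_mul hab (hq ω),
    ← hlam.integral_eq_one]
  refine integral_congr fun s hs => ?_
  rw [uIcc_of_le hab] at hs
  simp only [← Finset.sum_mul, hq_sum s hs, one_mul]

theorem IsProbDensityOn.klDivergence_integral_mul_le (hlam : IsProbDensityOn lam a b)
    (hab : a ≤ b) {p : Ω → ℝ} (hp : ∀ ω, 0 < p ω)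
    (hq : ∀ ω, ContinuousOn (fun s => q s ω) (Icc a b))
    (hq_pos : ∀ s ∈ Icc a b, ∀ ω, 0 < q s ω) :
    klDivergence p (fun ω => ∫ s in a..b, q s ω * lam s) ≤
      ∫ s in a..b, klDivergence p (q s) * lam s := by
  have hlog_int : ∀ ω, IntervalIntegrable (fun s => Real.log (p ω / q s ω) * lam s) volume a b :=
    fun ω => hlam.intervalIntegrable_mul hab <|
      (continuousOn_const.div (hq ω) fun s hs => (hq_pos s hs ω).ne').log
        fun s hs => (div_pos (hp ω) (hq_pos s hs ω)).ne'
  calc klDivergence p (fun ω => ∫ s in a..b, q s ω * lam s)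
      ≤ ∑ ω, p ω * ∫ s in a..b, Real.log (p ω / q s ω) * lam s :=
        Finset.sum_le_sum fun ω _ => mul_le_mul_of_nonneg_left
          (hlam.log_div_integral_mul_le hab (hq ω) (fun s hs => hq_pos s hs ω) (hp ω)) (hp ω).le
    _ = ∫ s in a..b, klDivergence p (q s) * lam s := by
        simp only [klDivergence, Finset.sum_mul, mul_assoc]
        rw [integral_finsetSum fun ω _ => (hlog_int ω).const_mul (p ω)]
        simp only [intervalIntegral.integral_const_mul]

end Mixture

theorem exists_equivalent_time_general
    {Ω : Type*} [Fintype Ω] (T : ℝ) (hT : 0 ≤ T)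
    (Ps : ℝ → Ω → ℝ) (lam : ℝ → ℝ)
    (hPcont : ∀ ω, ContinuousOn (fun s => Ps s ω) (Set.Icc 0 T))
    (hPpos : ∀ s ∈ Set.Icc (0 : ℝ) T, ∀ ω, 0 < Ps s ω)
    (hPsum : ∀ s ∈ Set.Icc (0 : ℝ) T, ∑ ω, Ps s ω = 1)
    (hlamnn : ∀ s ∈ Set.Icc (0 : ℝ) T, 0 ≤ lam s)
    (hlamint : IntervalIntegrable lam volume 0 T)
    (hlamsum : ∫ s in (0:ℝ)..T, lam s = 1)
    (M : Ω → ℝ) (hM : ∀ ω, M ω = ∫ s in (0:ℝ)..T, Ps s ω * lam s) :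
    ∃ tstar ∈ Set.Icc (0 : ℝ) T,
      (∑ ω, Ps 0 ω * Real.log (Ps 0 ω / M ω) =
        ∑ ω, Ps 0 ω * Real.log (Ps 0 ω / Ps tstar ω)) ∧
      ((-∑ ω, Ps 0 ω * Real.log (Ps 0 ω)) + ∑ ω, Ps 0 ω * Real.log (Ps 0 ω / M ω) =
        (-∑ ω, Ps 0 ω * Real.log (Ps 0 ω)) +
          ∑ ω, Ps 0 ω * Real.log (Ps 0 ω / Ps tstar ω)) := by
  obtain rfl : M = fun ω => ∫ s in (0:ℝ)..T, Ps s ω * lam s := funext hM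
  have hlam : IsProbDensityOn lam 0 T := ⟨hlamnn, hlamint, hlamsum⟩
  have h₀ : (0 : ℝ) ∈ Set.Icc 0 T := left_mem_Icc.2 hT
  have hP₀ : ∀ ω, 0 < Ps 0 ω := hPpos 0 h₀
  have hKL_ge : klDivergence (Ps 0) (Ps 0) ≤
      klDivergence (Ps 0) (fun ω => ∫ s in (0:ℝ)..T, Ps s ω * lam s) := by
    rw [klDivergence_self]
    refine klDivergence_nonneg hP₀
      (fun ω => hlam.integral_mul_pos hT (hPcont ω) fun s hs => hPpos s hs ω) ?_
    rw [hPsum 0 h₀, hlam.sum_integral_mul_eq_one hT hPcont hPsum]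
  obtain ⟨t, ht, hKL⟩ := hlam.exists_eq_of_le_integral_mul hT
    (continuousOn_klDivergence (fun ω => (hP₀ ω).ne') hPcont fun s hs ω => (hPpos s hs ω).ne')
    hKL_ge (hlam.klDivergence_integral_mul_le hT hP₀ hPcont hPpos)
  exact ⟨t, ht, hKL.symm, congrArg _ hKL.symm⟩

/-- **Paper's Proposition 3 (existence of the equivalent time).** Let `(Ps s)_{s ∈ [0,T]}` be
a family of everywhere-positive pmfs on a finite nonempty set `Ω`, pointwise continuous in
`s`, let `lam : [0,T] → [0,∞)` be an integrable sampling density with `∫₀ᵀ lam = 1`, and let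
`M ω = ∫₀ᵀ Ps s ω · lam s ds` be the net distribution. Then there is an equivalent time
`t* ∈ [0,T]` with `KL(Ps 0‖M) = KL(Ps 0‖Ps t*)`; consequently the curated dataset produces
the same asymptotic loss `H(Ps 0) + KL(Ps 0‖M)` as a dataset sampled entirely at time `t*`. -/
theorem exists_equivalent_time
    {Ω : Type*} [Fintype Ω] [Nonempty Ω] (T : ℝ) (hT : 0 ≤ T)
    (Ps : ℝ → Ω → ℝ) (lam : ℝ → ℝ)
    (hPcont : ∀ ω, ContinuousOn (fun s => Ps s ω) (Set.Icc 0 T))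
    (hPpos : ∀ s ∈ Set.Icc (0 : ℝ) T, ∀ ω, 0 < Ps s ω)
    (hPsum : ∀ s ∈ Set.Icc (0 : ℝ) T, ∑ ω, Ps s ω = 1)
    (hlamnn : ∀ s ∈ Set.Icc (0 : ℝ) T, 0 ≤ lam s)
    (hlamint : IntervalIntegrable lam volume 0 T)
    (hlamsum : ∫ s in (0:ℝ)..T, lam s = 1)
    (hint : ∀ ω, IntervalIntegrable (fun s => Ps s ω * lam s) volume 0 T)
    (M : Ω → ℝ) (hM : ∀ ω, M ω = ∫ s in (0:ℝ)..T, Ps s ω * lam s) :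
    ∃ tstar ∈ Set.Icc (0 : ℝ) T,
      (∑ ω, Ps 0 ω * Real.log (Ps 0 ω / M ω) =
        ∑ ω, Ps 0 ω * Real.log (Ps 0 ω / Ps tstar ω)) ∧
      ((-∑ ω, Ps 0 ω * Real.log (Ps 0 ω)) + ∑ ω, Ps 0 ω * Real.log (Ps 0 ω / M ω) =
        (-∑ ω, Ps 0 ω * Real.log (Ps 0 ω)) +
          ∑ ω, Ps 0 ω * Real.log (Ps 0 ω / Ps tstar ω)) :=
  exists_equivalent_time_general T hT Ps lam hPcont hPpos hPsum hlamnn hlamint hlamsum M hM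
end

section
/- Let P₀ and P_{t_1}, …, P_{t_k} be everywhere-positive probability mass functions on a finite nonempty set Ω, let λ_1, …, λ_k ≥ 0 with ∑ λ_i = 1, and suppose the net distribution M = ∑_{i=1}^k λ_i P_{t_i} satisfies M ≠ P₀. Let (X_i)_{i≥1} be i.i.d. with law P₀. Then KL(P₀‖M) > 0, and for every ε > 0 there exists n₀ < ∞ such that for all n ≥ n₀, with probability at least 1 − ε, (−1/n)·∑_{i=1}^n log P₀(X_i) < H(P₀) + KL(P₀‖M). That is, a dataset of bounded size from the current distribution P₀ outperforms, in probability, a dataset of infinite size curated over time whenever the curated dataset's net distribution differs from P₀. -/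
open MeasureTheory ProbabilityTheory Filter

/-- **Paper's Corollary 1 (the data network effect stalls).** Let `P₀` and `P_{t 1}, …, P_{t k}`
be everywhere-positive pmfs on a finite nonempty set, let `λ i ≥ 0` sum to `1`, and suppose
the net distribution `M = ∑ i, λ i • P_{t i}` differs from `P₀`. Let `X i` be i.i.d. with law
`P₀`. Then `KL(P₀‖M) > 0`, and for every `ε > 0` there is `n₀` such that for all `n ≥ n₀`,
with probability at least `1 − ε`, the empirical loss of `n` current samples is strictly
below the asymptotic loss `H(P₀) + KL(P₀‖M)` of an infinite dataset curated over time. -/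
theorem curated_dataset_has_finite_effectiveness
    {S : Type*} [Fintype S] [Nonempty S] [MeasurableSpace S] [MeasurableSingletonClass S]
    {k : ℕ}
    (P₀ : S → ℝ) (Pt : Fin k → S → ℝ) (lam : Fin k → ℝ)
    (hP₀pos : ∀ s, 0 < P₀ s) (hP₀sum : ∑ s, P₀ s = 1)
    (hPtpos : ∀ i s, 0 < Pt i s) (hPtsum : ∀ i, ∑ s, Pt i s = 1)
    (hlamnn : ∀ i, 0 ≤ lam i) (hlamsum : ∑ i, lam i = 1)
    (M : S → ℝ) (hM : ∀ s, M s = ∑ i, lam i * Pt i s)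
    (hne : M ≠ P₀)
    {Ω : Type*} [MeasurableSpace Ω] (μ : Measure Ω) [IsProbabilityMeasure μ]
    (X : ℕ → Ω → S)
    (hmeas : ∀ i, Measurable (X i))
    (hindep : iIndepFun X μ)
    (hlaw : ∀ i s, (μ (X i ⁻¹' {s})).toReal = P₀ s) :
    0 < ∑ s, P₀ s * Real.log (P₀ s / M s) ∧
      ∀ ε > (0 : ℝ), ∃ n₀ : ℕ, ∀ n ≥ n₀,
        ENNReal.ofReal (1 - ε) ≤
          μ {t | (-1 / (n : ℝ)) * ∑ i ∈ Finset.range n, Real.log (P₀ (X i t)) <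
            (-∑ s, P₀ s * Real.log (P₀ s)) + ∑ s, P₀ s * Real.log (P₀ s / M s)} := by
  -- positivity of M
  obtain ⟨j, hj⟩ : ∃ j, 0 < lam j := by
    by_contra h
    push_neg at h
    have : ∀ i, lam i = 0 := fun i => le_antisymm (h i) (hlamnn i)
    simp [this] at hlamsum
  have hMpos : ∀ s, 0 < M s := by
    intro s
    rw [hM s]
    calc (0:ℝ) < lam j * Pt j s := mul_pos hj (hPtpos j s)
    _ ≤ ∑ i, lam i * Pt i s :=
        Finset.single_le_sum (fun i _ => mul_nonneg (hlamnn i) (hPtpos i s).le)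
          (Finset.mem_univ j)
  have hMsum : ∑ s, M s = 1 := by
    simp only [hM]
    rw [Finset.sum_comm]
    simp only [← Finset.mul_sum]
    simp [fun i => hPtsum i, hlamsum]
  -- Part 1: strict Gibbs
  obtain ⟨s₀, hs₀⟩ : ∃ s, M s ≠ P₀ s := by
    by_contra h
    push_neg at h
    exact hne (funext h)
  have key : ∑ s, P₀ s * Real.log (M s / P₀ s) < ∑ s, P₀ s * (M s / P₀ s - 1) := by
    apply Finset.sum_lt_sum
    · intro s _
      exact mul_le_mul_of_nonneg_left
        (Real.log_le_sub_one_of_pos (div_pos (hMpos s) (hP₀pos s))) (hP₀pos s).le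
    · refine ⟨s₀, Finset.mem_univ s₀, ?_⟩
      apply mul_lt_mul_of_pos_left _ (hP₀pos s₀)
      apply Real.log_lt_sub_one_of_pos (div_pos (hMpos s₀) (hP₀pos s₀))
      intro h
      exact hs₀ ((div_eq_one_iff_eq (hP₀pos s₀).ne').mp h)
  have hrhs : ∑ s, P₀ s * (M s / P₀ s - 1) = 0 := by
    have : ∀ s, P₀ s * (M s / P₀ s - 1) = M s - P₀ s := by
      intro s
      rw [mul_sub, mul_one, mul_div_cancel₀ _ (hP₀pos s).ne']
    simp only [this, Finset.sum_sub_distrib, hMsum, hP₀sum, sub_self]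
  have hKLeq : ∑ s, P₀ s * Real.log (P₀ s / M s) = -∑ s, P₀ s * Real.log (M s / P₀ s) := by
    rw [← Finset.sum_neg_distrib]
    apply Finset.sum_congr rfl
    intro s _
    rw [Real.log_div (hP₀pos s).ne' (hMpos s).ne', Real.log_div (hMpos s).ne' (hP₀pos s).ne']
    ring
  have hKL : 0 < ∑ s, P₀ s * Real.log (P₀ s / M s) := by
    rw [hKLeq]; linarith [hrhs ▸ key]
  refine ⟨hKL, ?_⟩
  -- Part 2
  set g : S → ℝ := fun s => Real.log (P₀ s) with hg
  set Y : ℕ → Ω → ℝ := fun i ω => g (X i ω) with hY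
  have hgm : Measurable g := measurable_of_finite g
  have hYmeas : ∀ i, Measurable (Y i) := fun i => hgm.comp (hmeas i)
  have hYindep : Pairwise (Function.onFun (IndepFun · · μ) Y) := by
    intro i j hij
    exact (hindep.comp (fun _ => g) (fun _ => hgm)).indepFun hij
  have hmapeq : ∀ i, Measure.map (X i) μ = Measure.map (X 0) μ := by
    intro i
    apply MeasureTheory.Measure.ext_of_singleton
    intro s
    rw [Measure.map_apply (hmeas i) (measurableSet_singleton s),
      Measure.map_apply (hmeas 0) (measurableSet_singleton s)]
    have h1 := hlaw i s
    have h2 := hlaw 0 s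
    rw [← ENNReal.ofReal_toReal (measure_ne_top μ _), h1,
      ← ENNReal.ofReal_toReal (measure_ne_top μ (X 0 ⁻¹' {s})), h2]
  have hident : ∀ i, IdentDistrib (Y i) (Y 0) μ μ := by
    intro i
    exact (⟨(hmeas i).aemeasurable, (hmeas 0).aemeasurable, hmapeq i⟩ :
      IdentDistrib (X i) (X 0) μ μ).comp hgm
  have hint : Integrable (Y 0) μ := by
    apply Integrable.mono' (integrable_const (∑ s, |g s|)) (hYmeas 0).aestronglyMeasurable
    filter_upwards with ω
    rw [Real.norm_eq_abs]
    exact Finset.single_le_sum (fun s _ => abs_nonneg (g s)) (Finset.mem_univ (X 0 ω))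
  have hE : μ[Y 0] = ∑ s, P₀ s * Real.log (P₀ s) := by
    have hmap : IsProbabilityMeasure (Measure.map (X 0) μ) :=
      Measure.isProbabilityMeasure_map (hmeas 0).aemeasurable
    have : μ[Y 0] = ∫ s, g s ∂(Measure.map (X 0) μ) :=
      (integral_map (hmeas 0).aemeasurable hgm.aestronglyMeasurable).symm
    rw [this, integral_fintype (f := g) (Integrable.of_finite)]
    apply Finset.sum_congr rfl
    intro s _
    rw [measureReal_def, Measure.map_apply (hmeas 0) (measurableSet_singleton s), smul_eq_mul, hlaw 0 s]
  have hslln := strong_law_ae_real Y hint hYindep hident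
  rw [hE] at hslln
  set Hneg : ℝ := ∑ s, P₀ s * Real.log (P₀ s) with hHneg
  set f : ℕ → Ω → ℝ := fun n ω => (∑ i ∈ Finset.range n, Y i ω) / n with hf
  have hfm : ∀ n, AEStronglyMeasurable (f n) μ := by
    intro n
    exact ((Finset.measurable_sum _ (fun i _ => hYmeas i)).div_const _).aestronglyMeasurable
  have hTIM : TendstoInMeasure μ f atTop (fun _ => Hneg) :=
    tendstoInMeasure_of_tendsto_ae hfm hslln
  intro ε hε
  set KL := ∑ s, P₀ s * Real.log (P₀ s / M s) with hKLdef
  have hpos : (0:ENNReal) < ENNReal.ofReal ε := ENNReal.ofReal_pos.mpr hε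
  have hev := (tendstoInMeasure_iff_dist.mp hTIM KL hKL).eventually_lt_const hpos
  rw [Filter.eventually_atTop] at hev
  obtain ⟨n₀, hn₀⟩ := hev
  refine ⟨n₀, fun n hn => ?_⟩
  by_cases hε1 : 1 ≤ ε
  · rw [ENNReal.ofReal_eq_zero.mpr (by linarith)]
    exact zero_le
  push_neg at hε1
  set B := {x | KL ≤ dist (f n x) Hneg} with hB
  have hsub : Bᶜ ⊆ {t | (-1 / (n : ℝ)) * ∑ i ∈ Finset.range n, Real.log (P₀ (X i t)) <
      (-Hneg) + KL} := by
    intro t ht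
    simp only [hB, Set.mem_compl_iff, Set.mem_setOf_eq, not_le] at ht
    have habs : |f n t - Hneg| < KL := by rwa [Real.dist_eq] at ht
    have h1 : Hneg - f n t < KL := by
      have := abs_lt.mp habs
      linarith [this.1]
    have heq : (-1 / (n : ℝ)) * ∑ i ∈ Finset.range n, Real.log (P₀ (X i t)) = -(f n t) := by
      simp only [hf, hY, hg]
      ring
    simp only [Set.mem_setOf_eq, heq]
    linarith
  have hunion : μ Set.univ ≤ μ B + μ Bᶜ := by
    rw [← Set.union_compl_self B]
    exact measure_union_le B Bᶜ
  rw [measure_univ] at hunion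
  have h2 : (1:ENNReal) - μ B ≤ μ Bᶜ := tsub_le_iff_left.mpr hunion
  have h3 : ENNReal.ofReal (1 - ε) ≤ 1 - ENNReal.ofReal ε := by
    rw [← ENNReal.ofReal_one, ← ENNReal.ofReal_sub _ hε.le]
  calc ENNReal.ofReal (1 - ε) ≤ 1 - ENNReal.ofReal ε := h3
    _ ≤ 1 - μ B := tsub_le_tsub_left (hn₀ n hn).le 1
    _ ≤ μ Bᶜ := h2
    _ ≤ _ := measure_mono hsub
end
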